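/- Let q be a prime power and 1 ≤ n ≤ q−1. If the monomial digraph D(q; n, n) is strong and q > (n−1)⁴, then diam(D(q; n, n)) ≤ 9. -/

import Mathlib

/-!
Every element `c` of `F` is a difference `x ^ n - y ^ n`, and then any two vertices are
joined by a walk of length exactly 6:
`(a, b) → (0, -b) → (y, b) → (1, y ^ n - b) → (x, v) → (0, -v) → (u, v)` with `v = b + c`.

With `d = gcd(n, q - 1) ≤ n`, the `n`-th powers are exactly the `d`-th powers. For `d = 1`
there is nothing to do and for `d = 2` one has `c = ((c + 1) / 2) ^ 2 - ((c - 1) / 2) ^ 2`.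
For `d ≥ 3` take a character `τ` of order `d` and count the `a` for which `a` and `a - c` are
both nonzero `d`-th powers: the count is a combination of the Jacobi sums `J(τ ^ j, τ ^ i)`,
where `(0, 0)` contributes `q - 2`, the `3(d - 1)` pairs with `j = 0`, `i = 0` or `i + j = d`
have absolute value `1`, and the remaining `(d - 1)(d - 2)` have absolute value `√q`.
Since `√q > (d - 1) ^ 2`, the main term wins.
-/

/-- `walkLen r k x y` means there is a directed walk of length exactly `k`
from `x` to `y` in the digraph with arc relation `r`. -/
def walkLen {V : Type*} (r : V → V → Prop) : ℕ → V → V → Prop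
  | 0 => fun x y => x = y
  | k + 1 => fun x y => ∃ z, r x z ∧ walkLen r k z y

/-- The distance from `x` to `y`: the minimum length of a directed walk,
`⊤` if `y` is not reachable from `x`. -/
noncomputable def ddist {V : Type*} (r : V → V → Prop) (x y : V) : ℕ∞ :=
  ⨅ n ∈ {n : ℕ | walkLen r n x y}, (n : ℕ∞)

/-- The diameter of the digraph: the maximum of distances over all ordered pairs. -/
noncomputable def ddiam {V : Type*} (r : V → V → Prop) : ℕ∞ :=
  ⨆ x, ⨆ y, ddist r x y

/-- A digraph is strong if every vertex is reachable from every vertex. -/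
def IsStrongDigraph {V : Type*} (r : V → V → Prop) : Prop :=
  ∀ x y : V, ∃ n : ℕ, walkLen r n x y

/-- The arc relation of the monomial digraph `D(q; m, n)`:
`(x₁, x₂) → (y₁, y₂)` iff `x₂ + y₂ = x₁ ^ m * y₁ ^ n`. -/
def monomialArc {F : Type*} [Field F] (m n : ℕ) (x y : F × F) : Prop :=
  x.2 + y.2 = x.1 ^ m * y.1 ^ n

section Walks

variable {V : Type*} {r : V → V → Prop}

lemma ddist_le_of_walkLen {k : ℕ} {x y : V} (h : walkLen r k x y) : ddist r x y ≤ k :=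
  iInf₂_le k h

lemma ddiam_le_of_forall_walkLen {k : ℕ} (h : ∀ x y : V, walkLen r k x y) : ddiam r ≤ k :=
  iSup₂_le fun x y => ddist_le_of_walkLen (h x y)

end Walks

section MonomialDigraph

variable {F : Type*} [Field F] {n : ℕ}

lemma walkLen_monomialArc_six (hn : n ≠ 0) (a b u x y : F) :
    walkLen (monomialArc n n) 6 (a, b) (u, b + (x ^ n - y ^ n)) := by
  refine ⟨(0, -b), ?_, (y, b), ?_, (1, y ^ n - b), ?_, (x, b + (x ^ n - y ^ n)), ?_,
    (0, -(b + (x ^ n - y ^ n))), ?_, _, ?_, rfl⟩ <;>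
  simp only [monomialArc, zero_pow hn, one_pow, zero_mul, mul_zero, one_mul] <;> ring

lemma ddiam_monomialArc_le_six (hn : n ≠ 0) (h : ∀ c : F, ∃ x y : F, x ^ n - y ^ n = c) :
    ddiam (monomialArc (F := F) n n) ≤ 6 := by
  refine ddiam_le_of_forall_walkLen fun ⟨a, b⟩ ⟨u, v⟩ => ?_
  obtain ⟨x, y, hxy⟩ := h (v - b)
  simpa [hxy] using walkLen_monomialArc_six hn a b u x y

end MonomialDigraph

lemma exists_sq_sub_sq_eq {F : Type*} [Field F] (h2 : (2 : F) ≠ 0) (c : F) :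
    ∃ x y : F, x ^ 2 - y ^ 2 = c :=
  ⟨(c + 1) / 2, (c - 1) / 2, by field_simp; ring⟩

section PowersModGcd

variable {F : Type*} [Field F] [Fintype F] {n : ℕ}

lemma exists_pow_eq_pow_gcd (hn : n ≠ 0) (y : F) :
    ∃ z : F, z ^ n = y ^ n.gcd (Fintype.card F - 1) := by
  classical
  rcases eq_or_ne y 0 with rfl | hy
  · refine ⟨0, ?_⟩
    rw [zero_pow hn, zero_pow (Nat.gcd_pos_of_pos_left _ (Nat.pos_of_ne_zero hn)).ne']
  set u : Fˣ := Units.mk0 y hy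
  have hu : u ^ (Fintype.card F - 1) = 1 := by rw [← Fintype.card_units]; exact pow_card_eq_one
  refine ⟨(u ^ Nat.gcdA n (Fintype.card F - 1) : Fˣ), ?_⟩
  have key : (u ^ Nat.gcdA n (Fintype.card F - 1)) ^ n = u ^ n.gcd (Fintype.card F - 1) := by
    rw [← zpow_natCast u, Nat.gcd_eq_gcd_ab, zpow_add, zpow_mul u (Fintype.card F - 1 : ℕ),
      zpow_natCast u, hu, one_zpow, mul_one, mul_comm, zpow_mul, zpow_natCast]
  simpa [u] using congrArg Units.val key

lemma two_ne_zero_of_two_dvd_card_sub_one (h : 2 ∣ Fintype.card F - 1) : (2 : F) ≠ 0 := by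
  refine Ring.two_ne_zero fun hchar => ?_
  have := FiniteField.even_card_of_char_two hchar
  have := Fintype.one_lt_card (α := F)
  omega

end PowersModGcd

section Characters

variable {F : Type*} [Field F] [Fintype F]

lemma MulChar.norm_apply_eq_one (χ : MulChar F ℂ) {x : F} (hx : x ≠ 0) : ‖χ x‖ = 1 := by
  have h : χ x ^ (Fintype.card F - 1) = 1 := by
    rw [← map_pow, FiniteField.pow_card_sub_one_eq_one x hx, map_one]
  exact Complex.norm_eq_one_of_pow_eq_one h (by have := Fintype.one_lt_card (α := F); omega)

lemma MulChar.exists_pow_orderOf_eq_of_apply_eq_one {R : Type*} [CommRing R] (χ : MulChar F R)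
    {x : F} (hx : x ≠ 0) (h : χ x = 1) : ∃ y : F, y ^ orderOf χ = x := by
  obtain ⟨g, hg⟩ := IsCyclic.exists_generator (α := Fˣ)
  have hord : orderOf (χ g) = orderOf χ := orderOf_eq_orderOf_iff.mpr fun k => by
    rw [MulChar.eq_iff hg, ← MulChar.pow_apply_coe, MulChar.one_apply_coe]
  obtain ⟨m, hm⟩ := mem_powers_iff_mem_zpowers.mpr (hg (Units.mk0 x hx))
  have hxm : x = (g : F) ^ m := by simpa using congrArg Units.val hm.symm
  obtain ⟨k, rfl⟩ : orderOf χ ∣ m := by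
    rw [← hord]
    exact orderOf_dvd_of_pow_eq_one (by rw [← map_pow, ← hxm, h])
  exact ⟨(g : F) ^ k, by rw [hxm, ← pow_mul, mul_comm]⟩

lemma sum_apply_mul_apply_sub_eq_jacobiSum {R : Type*} [CommRing R] (χ ψ : MulChar F R)
    {c : F} (hc : c ≠ 0) : ∑ a : F, χ a * ψ (a - c) = χ c * ψ (-c) * jacobiSum χ ψ := by
  rw [jacobiSum, Finset.mul_sum,
    ← Equiv.sum_comp (Equiv.mulLeft₀ c hc) fun a => χ a * ψ (a - c)]
  refine Finset.sum_congr rfl fun x _ => ?_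
  rw [Equiv.mulLeft₀_apply, show c * x - c = -c * (1 - x) by ring, map_mul, map_mul]
  ring

lemma star_jacobiSum (χ ψ : MulChar F ℂ) : star (jacobiSum χ ψ) = jacobiSum χ⁻¹ ψ⁻¹ := by
  simp only [jacobiSum, star_sum, star_mul', MulChar.star_apply']

lemma norm_jacobiSum_eq_sqrt {χ ψ : MulChar F ℂ} (hχ : χ ≠ 1) (hψ : ψ ≠ 1) (hχψ : χ * ψ ≠ 1) :
    ‖jacobiSum χ ψ‖ = √(Fintype.card F) := by
  have hchar : ringChar ℂ ≠ ringChar F := by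
    rw [ringChar.eq_zero]
    exact (CharP.char_is_prime F (ringChar F)).ne_zero.symm
  have h := jacobiSum_mul_jacobiSum_inv hchar hχ hψ hχψ
  rw [← star_jacobiSum, Complex.star_def, Complex.mul_conj, ← Complex.ofReal_natCast] at h
  rw [Complex.norm_def, Complex.ofReal_injective h]

lemma norm_jacobiSum_one_left {χ : MulChar F ℂ} (hχ : χ ≠ 1) : ‖jacobiSum 1 χ‖ = 1 := by
  rw [jacobiSum_one_nontrivial hχ, norm_neg, norm_one]

lemma norm_jacobiSum_inv {χ : MulChar F ℂ} (hχ : χ ≠ 1) : ‖jacobiSum χ χ⁻¹‖ = 1 := by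
  rw [jacobiSum_nontrivial_inv hχ, norm_neg, χ.norm_apply_eq_one (neg_ne_zero.mpr one_ne_zero)]

end Characters

lemma pow_ne_one_of_mem_Ico_orderOf {G : Type*} [Monoid G] {x : G} {i : ℕ}
    (hi : i ∈ Finset.Ico 1 (orderOf x)) : x ^ i ≠ 1 :=
  pow_ne_one_of_lt_orderOf (Nat.one_le_iff_ne_zero.mp (Finset.mem_Ico.mp hi).1)
    (Finset.mem_Ico.mp hi).2

lemma pow_mul_pow_ne_one_of_add_ne_orderOf {G : Type*} [Monoid G] {x : G} {i j : ℕ}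
    (hi : i ∈ Finset.Ico 1 (orderOf x)) (hj : j ∈ Finset.Ico 1 (orderOf x))
    (hij : j + i ≠ orderOf x) : x ^ j * x ^ i ≠ 1 := by
  rw [Finset.mem_Ico] at hi hj
  rw [← pow_add]
  rcases hij.lt_or_gt with h | h
  · exact pow_ne_one_of_lt_orderOf (by omega) h
  · rw [show j + i = (j + i - orderOf x) + orderOf x by omega, pow_add, pow_orderOf_eq_one,
      mul_one]
    exact pow_ne_one_of_lt_orderOf (by omega) (by omega)

section CharPowSum

open Finset

variable {F : Type*} [Field F] [Fintype F] (τ : MulChar F ℂ)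

-- `orderOf τ` times the indicator function of the nonzero `orderOf τ`-th powers
noncomputable def charPowSum (x : F) : ℂ := ∑ j ∈ range (orderOf τ), (τ ^ j) x

variable {τ}

lemma exists_pow_orderOf_eq_of_charPowSum_ne_zero {x : F} (h : charPowSum τ x ≠ 0) :
    ∃ y : F, y ^ orderOf τ = x := by
  have hx : x ≠ 0 := by
    rintro rfl
    exact h (sum_eq_zero fun j _ => MulChar.map_nonunit _ not_isUnit_zero)
  refine τ.exists_pow_orderOf_eq_of_apply_eq_one hx (by_contra fun h1 => h ?_)
  have hpow : ∀ j, (τ ^ j) x = τ x ^ j := fun j => by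
    rw [← hx.isUnit.unit_spec, MulChar.pow_apply_coe]
  rw [charPowSum, sum_congr rfl fun j _ => hpow j, geom_sum_eq h1, ← hpow, pow_orderOf_eq_one,
    MulChar.one_apply hx.isUnit, sub_self, zero_div]

lemma sum_charPowSum_mul_charPowSum_sub {c : F} (hc : c ≠ 0) :
    ∑ a : F, charPowSum τ a * charPowSum τ (a - c) =
      ∑ j ∈ range (orderOf τ), ∑ i ∈ range (orderOf τ),
        (τ ^ j) c * (τ ^ i) (-c) * jacobiSum (τ ^ j) (τ ^ i) := by
  simp only [charPowSum, sum_mul_sum]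
  rw [sum_comm]
  refine sum_congr rfl fun j _ => ?_
  rw [sum_comm]
  exact sum_congr rfl fun i _ => sum_apply_mul_apply_sub_eq_jacobiSum _ _ hc

lemma sum_norm_jacobiSum_pow_le {j : ℕ} (hj : j ∈ Ico 1 (orderOf τ)) :
    ∑ i ∈ range (orderOf τ), ‖jacobiSum (τ ^ j) (τ ^ i)‖ ≤
      2 + (orderOf τ - 2 : ℕ) * √(Fintype.card F) := by
  have hτj : τ ^ j ≠ 1 := pow_ne_one_of_mem_Ico_orderOf hj
  have hdj : orderOf τ - j ∈ Ico 1 (orderOf τ) := by simp only [mem_Ico] at hj ⊢; omega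
  have hinv : τ ^ (orderOf τ - j) = (τ ^ j)⁻¹ := by
    rw [eq_inv_iff_mul_eq_one, ← pow_add, Nat.sub_add_cancel (mem_Ico.mp hj).2.le,
      pow_orderOf_eq_one]
  have hrest :
      ∑ i ∈ (Ico 1 (orderOf τ)).erase (orderOf τ - j), ‖jacobiSum (τ ^ j) (τ ^ i)‖ ≤
        (orderOf τ - 2 : ℕ) * √(Fintype.card F) := by
    refine (sum_le_sum fun i hi => (norm_jacobiSum_eq_sqrt hτj
      (pow_ne_one_of_mem_Ico_orderOf (mem_of_mem_erase hi))
      (pow_mul_pow_ne_one_of_add_ne_orderOf (mem_of_mem_erase hi) hj ?_)).le).trans_eq ?_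
    · have := ne_of_mem_erase hi
      omega
    · rw [sum_const, card_erase_of_mem hdj, Nat.card_Ico, nsmul_eq_mul, Nat.sub_sub]
  rw [range_eq_Ico, sum_eq_sum_Ico_succ_bot (orderOf_pos τ), ← add_sum_erase _ _ hdj, pow_zero,
    jacobiSum_comm, norm_jacobiSum_one_left hτj, hinv, norm_jacobiSum_inv hτj]
  linarith

lemma norm_sum_charPowSum_mul_charPowSum_sub_sub_le {c : F} (hc : c ≠ 0) :
    ‖∑ a : F, charPowSum τ a * charPowSum τ (a - c) - (Fintype.card F - 2 : ℂ)‖ ≤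
      (orderOf τ - 1 : ℕ) * (3 + (orderOf τ - 2 : ℕ) * √(Fintype.card F)) := by
  rw [sum_charPowSum_mul_charPowSum_sub hc]
  set w : ℕ → ℕ → ℂ := fun j i => (τ ^ j) c * (τ ^ i) (-c) * jacobiSum (τ ^ j) (τ ^ i)
  have hw : ∀ j i, ‖w j i‖ = ‖jacobiSum (τ ^ j) (τ ^ i)‖ := fun j i => by
    rw [norm_mul, norm_mul, MulChar.norm_apply_eq_one _ hc,
      MulChar.norm_apply_eq_one _ (neg_ne_zero.mpr hc), one_mul, one_mul]
  have hw₀ : w 0 0 = Fintype.card F - 2 := by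
    simp only [w, pow_zero, MulChar.one_apply hc.isUnit,
      MulChar.one_apply (neg_ne_zero.mpr hc).isUnit, jacobiSum_one_one, one_mul]
  change ‖∑ j ∈ range (orderOf τ), ∑ i ∈ range (orderOf τ), w j i - _‖ ≤ _
  rw [range_eq_Ico, sum_eq_sum_Ico_succ_bot (orderOf_pos τ),
    sum_eq_sum_Ico_succ_bot (orderOf_pos τ), hw₀, ← range_eq_Ico, add_sub_right_comm,
    add_sub_cancel_left, zero_add]
  calc _ ≤ ∑ i ∈ Ico 1 (orderOf τ), ‖w 0 i‖ +
        ∑ j ∈ Ico 1 (orderOf τ), ∑ i ∈ range (orderOf τ), ‖w j i‖ :=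
        (norm_add_le _ _).trans (add_le_add (norm_sum_le _ _)
          ((norm_sum_le _ _).trans (sum_le_sum fun j _ => norm_sum_le _ _)))
    _ ≤ ∑ i ∈ Ico 1 (orderOf τ), 1 +
        ∑ j ∈ Ico 1 (orderOf τ), (2 + (orderOf τ - 2 : ℕ) * √(Fintype.card F)) := by
      simp only [hw, pow_zero]
      exact add_le_add
        (sum_le_sum fun i hi => (norm_jacobiSum_one_left (pow_ne_one_of_mem_Ico_orderOf hi)).le)
        (sum_le_sum fun j hj => sum_norm_jacobiSum_pow_le hj)
    _ = _ := by simp only [sum_const, Nat.card_Ico, nsmul_eq_mul]; ring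

end CharPowSum

lemma mul_three_add_mul_sqrt_lt {d q : ℕ} (hd : 3 ≤ d) (hq : (d - 1) ^ 4 < q) :
    ((d - 1 : ℕ) : ℝ) * (3 + (d - 2 : ℕ) * √q) < q - 2 := by
  have hx : ((d - 2 : ℕ) : ℝ) = ((d - 1 : ℕ) : ℝ) - 1 := by
    rw [show d - 1 = (d - 2) + 1 by omega]; push_cast; ring
  rw [hx]
  set x : ℝ := ((d - 1 : ℕ) : ℝ)
  have hx2 : 2 ≤ x := by unfold x; exact_mod_cast (by omega : 2 ≤ d - 1)
  have hs : √q ^ 2 = q := Real.sq_sqrt (Nat.cast_nonneg q)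
  have hxs : x ^ 2 < √q := by
    have h4 : x ^ 4 < q := by unfold x; exact_mod_cast hq
    nlinarith [Real.sqrt_nonneg q]
  nlinarith [mul_pos ((sq_nonneg x).trans_lt hxs) (sub_pos.mpr hxs),
    mul_nonneg (by linarith : (0 : ℝ) ≤ x - 2) (sq_nonneg (x + 1))]

section Differences

variable {F : Type*} [Field F] [Fintype F]

lemma exists_pow_orderOf_sub_pow_orderOf_eq {τ : MulChar F ℂ}
    (hτ : ((orderOf τ - 1 : ℕ) : ℝ) * (3 + (orderOf τ - 2 : ℕ) * √(Fintype.card F)) <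
      Fintype.card F - 2)
    {c : F} (hc : c ≠ 0) : ∃ x y : F, x ^ orderOf τ - y ^ orderOf τ = c := by
  have hT : ∑ a : F, charPowSum τ a * charPowSum τ (a - c) ≠ 0 := by
    intro h0
    have hbound := norm_sum_charPowSum_mul_charPowSum_sub_sub_le (τ := τ) hc
    have hq : (2 : ℝ) ≤ Fintype.card F := by exact_mod_cast Fintype.one_lt_card (α := F)
    rw [h0, zero_sub, norm_neg,
      show (Fintype.card F - 2 : ℂ) = ((Fintype.card F - 2 : ℝ) : ℂ) by push_cast; ring,
      Complex.norm_real, Real.norm_of_nonneg (by linarith)] at hbound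
    linarith
  obtain ⟨a, -, ha⟩ := Finset.exists_ne_zero_of_sum_ne_zero hT
  obtain ⟨x, hx⟩ := exists_pow_orderOf_eq_of_charPowSum_ne_zero (left_ne_zero_of_mul ha)
  obtain ⟨y, hy⟩ := exists_pow_orderOf_eq_of_charPowSum_ne_zero (right_ne_zero_of_mul ha)
  exact ⟨x, y, by rw [hx, hy]; ring⟩

lemma exists_pow_sub_pow_eq_of_dvd {d : ℕ} (hd : d ∣ Fintype.card F - 1) (hd0 : 0 < d)
    (hq : (d - 1) ^ 4 < Fintype.card F) (c : F) : ∃ x y : F, x ^ d - y ^ d = c := by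
  obtain rfl | rfl | hd3 : d = 1 ∨ d = 2 ∨ 3 ≤ d := by omega
  · exact ⟨c, 0, by simp⟩
  · exact exists_sq_sub_sq_eq (two_ne_zero_of_two_dvd_card_sub_one hd) c
  rcases eq_or_ne c 0 with rfl | hc
  · exact ⟨0, 0, sub_self _⟩
  obtain ⟨τ, rfl⟩ := MulChar.exists_mulChar_orderOf F hd (Complex.isPrimitiveRoot_exp d hd0.ne')
  exact exists_pow_orderOf_sub_pow_orderOf_eq (mul_three_add_mul_sqrt_lt hd3 hq) hc

lemma exists_pow_sub_pow_eq {n : ℕ} (hn : n ≠ 0) (hq : (n - 1) ^ 4 < Fintype.card F) (c : F) :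
    ∃ x y : F, x ^ n - y ^ n = c := by
  have hd0 : 0 < n.gcd (Fintype.card F - 1) :=
    Nat.gcd_pos_of_pos_left _ (Nat.pos_of_ne_zero hn)
  have hdn : n.gcd (Fintype.card F - 1) ≤ n :=
    Nat.le_of_dvd (Nat.pos_of_ne_zero hn) (Nat.gcd_dvd_left _ _)
  obtain ⟨x, y, rfl⟩ := exists_pow_sub_pow_eq_of_dvd (Nat.gcd_dvd_right _ _) hd0
    ((Nat.pow_le_pow_left (Nat.sub_le_sub_right hdn 1) 4).trans_lt hq) c
  obtain ⟨x', hx⟩ := exists_pow_eq_pow_gcd hn x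
  obtain ⟨y', hy⟩ := exists_pow_eq_pow_gcd hn y
  exact ⟨x', y', by rw [hx, hy]⟩

end Differences

theorem diam_le_9_general {p e n : ℕ}
    (F : Type*) [Field F] [Fintype F] (hF : Fintype.card F = p ^ e)
    (hn1 : 1 ≤ n) (hq : (n - 1) ^ 4 < p ^ e) :
    ddiam (monomialArc (F := F) n n) ≤ 9 := by
  have hn : n ≠ 0 := by omega
  calc ddiam (monomialArc (F := F) n n)
      ≤ 6 := ddiam_monomialArc_le_six hn (exists_pow_sub_pow_eq hn (hF ▸ hq))
    _ ≤ 9 := by norm_num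

theorem diam_le_9 {p e n : ℕ} (hp : p.Prime) (he : 0 < e)
    (F : Type*) [Field F] [Fintype F] (hF : Fintype.card F = p ^ e)
    (hn1 : 1 ≤ n) (hn : n ≤ p ^ e - 1)
    (hstrong : IsStrongDigraph (monomialArc (F := F) n n))
    (hq : (n - 1) ^ 4 < p ^ e) :
    ddiam (monomialArc (F := F) n n) ≤ 9 :=
  diam_le_9_general F hF hn1 hq
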